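/- arXiv:1905.07779 — 2 statements merged into one kernel-verified Lean document; each statement's English description precedes it below -/
import Mathlib

section
/- Asymptotic linear scaling of non-zero integral counts (abstract form): suppose for each N, points p₁,…,p_N ∈ ℝ³ are d-separated, and suppose the integral value associated to a quadruple (i,j,k,l) has absolute value < ε whenever any of p_j, p_k, p_l lies outside the ball of radius R(ε) around p_i (R(ε) depending only on ε, not on N or the configuration). Then the number N₂ₑ(ε) of quadruples whose integral has absolute value ≥ ε satisfies N₂ₑ(ε) ≤ C(ε,d)·N for all N, with C(ε,d) = (1 + 2R(ε)/d)⁹. -/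
open Metric MeasureTheory ENNReal
open scoped Classical

lemma packing_bound (d Rε : ℝ) (hd : 0 < d) (hRε : 0 < Rε) {N : ℕ}
    (p : Fin N → EuclideanSpace ℝ (Fin 3))
    (hsep : ∀ i j : Fin N, i ≠ j → d ≤ dist (p i) (p j))
    (c : EuclideanSpace ℝ (Fin 3)) :
    ((Finset.univ.filter (fun j => p j ∈ closedBall c Rε)).card : ℝ) ≤ (1 + 2 * Rε / d) ^ 3 := by
  set S := Finset.univ.filter (fun j => p j ∈ closedBall c Rε) with hS
  have hdisj : (S : Set (Fin N)).PairwiseDisjoint (fun j => ball (p j) (d / 2)) := by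
    intro i _ j _ hij
    exact ball_disjoint_ball (by linarith [hsep i j hij])
  have hmeas : ∀ j ∈ S, MeasurableSet (ball (p j) (d / 2)) := fun j _ => measurableSet_ball
  have hsum : ∑ j ∈ S, volume (ball (p j) (d / 2)) = volume (⋃ j ∈ S, ball (p j) (d / 2)) :=
    (measure_biUnion_finset hdisj hmeas).symm
  have hsub : (⋃ j ∈ S, ball (p j) (d / 2)) ⊆ closedBall c (Rε + d / 2) := by
    intro x hx
    simp only [Set.mem_iUnion] at hx
    obtain ⟨j, hj, hxj⟩ := hx
    have hjc : dist (p j) c ≤ Rε := by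
      simp only [hS, Finset.mem_filter, mem_closedBall] at hj; exact hj.2
    have := dist_triangle x (p j) c
    rw [mem_closedBall]
    have : dist x (p j) < d / 2 := mem_ball.mp hxj
    calc dist x c ≤ dist x (p j) + dist (p j) c := dist_triangle _ _ _
      _ ≤ Rε + d / 2 := by linarith
  have key : (S.card : ℝ≥0∞) * volume (ball c (d / 2)) ≤ volume (closedBall c (Rε + d / 2)) := by
    have : ∀ j ∈ S, volume (ball (p j) (d / 2)) = volume (ball c (d / 2)) := by
      intro j _
      rw [EuclideanSpace.volume_ball, EuclideanSpace.volume_ball]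
    calc (S.card : ℝ≥0∞) * volume (ball c (d / 2)) = ∑ j ∈ S, volume (ball (p j) (d / 2)) := by
          rw [Finset.sum_congr rfl this, Finset.sum_const, nsmul_eq_mul]
      _ = volume (⋃ j ∈ S, ball (p j) (d / 2)) := hsum
      _ ≤ volume (closedBall c (Rε + d / 2)) := measure_mono hsub
  rw [EuclideanSpace.volume_ball, EuclideanSpace.volume_closedBall] at key
  set K : ℝ≥0∞ := ENNReal.ofReal (Real.sqrt Real.pi ^ Fintype.card (Fin 3) /
    Real.Gamma (Fintype.card (Fin 3) / 2 + 1)) with hK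
  have hKpos : 0 < K := by
    rw [hK]
    apply ENNReal.ofReal_pos.mpr
    apply div_pos
    · positivity
    · exact Real.Gamma_pos_of_pos (by norm_num)
  have key2 : (S.card : ℝ≥0∞) * ENNReal.ofReal (d / 2) ^ Fintype.card (Fin 3) ≤
      ENNReal.ofReal (Rε + d / 2) ^ Fintype.card (Fin 3) := by
    rw [← ENNReal.mul_le_mul_iff_left hKpos.ne' ENNReal.ofReal_ne_top (a := _)]
    calc (S.card : ℝ≥0∞) * ENNReal.ofReal (d / 2) ^ Fintype.card (Fin 3) * K
        = (S.card : ℝ≥0∞) * (ENNReal.ofReal (d / 2) ^ Fintype.card (Fin 3) * K) := by ring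
      _ ≤ _ := key
  simp only [Fintype.card_fin] at key2
  have hd2 : (0:ℝ) < d / 2 := by linarith
  have key3 : (S.card : ℝ) * (d / 2) ^ 3 ≤ (Rε + d / 2) ^ 3 := by
    have := ENNReal.toReal_mono (pow_ne_top ENNReal.ofReal_ne_top) key2
    rw [ENNReal.toReal_mul, ENNReal.toReal_pow, ENNReal.toReal_pow, ENNReal.toReal_natCast,
      ENNReal.toReal_ofReal hd2.le, ENNReal.toReal_ofReal (by linarith)] at this
    exact this
  have heq : (1 + 2 * Rε / d) ^ 3 = (Rε + d / 2) ^ 3 / (d / 2) ^ 3 := by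
    rw [← div_pow]
    congr 1
    field_simp
    ring
  rw [heq, le_div_iff₀ (by positivity)]
  exact key3

open Metric

/-- Asymptotic linear scaling of the number of non-zero two-electron integrals
(abstract form). -/
theorem nonzero_integral_count_linear (d ε Rε : ℝ) (hd : 0 < d) (hε : 0 < ε)
    (hRε : 0 < Rε)
    (p : ∀ N : ℕ, Fin N → EuclideanSpace ℝ (Fin 3))
    (I : ∀ N : ℕ, Fin N × Fin N × Fin N × Fin N → ℝ)
    (hsep : ∀ N, ∀ i j : Fin N, i ≠ j → d ≤ dist (p N i) (p N j))
    (hdecay : ∀ N, ∀ q : Fin N × Fin N × Fin N × Fin N, ε ≤ |I N q| →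
      p N q.2.1 ∈ closedBall (p N q.1) Rε ∧ p N q.2.2.1 ∈ closedBall (p N q.1) Rε ∧
        p N q.2.2.2 ∈ closedBall (p N q.1) Rε) :
    ∀ N : ℕ,
      (({q : Fin N × Fin N × Fin N × Fin N | ε ≤ |I N q|}.ncard : ℝ)) ≤
        (1 + 2 * Rε / d) ^ 9 * N := by
  intro N
  set S : Fin N → Finset (Fin N) :=
    fun i => Finset.univ.filter (fun j => p N j ∈ closedBall (p N i) Rε) with hSdef
  set T : Finset (Fin N × Fin N × Fin N × Fin N) :=
    Finset.univ.filter (fun q => ε ≤ |I N q|) with hTdef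
  have hset : {q : Fin N × Fin N × Fin N × Fin N | ε ≤ |I N q|} = ↑T := by
    ext q; simp [hTdef]
  rw [hset, Set.ncard_coe_finset]
  have hsub : T ⊆ Finset.univ.biUnion (fun i => {i} ×ˢ S i ×ˢ S i ×ˢ S i) := by
    intro q hq
    have hq' : ε ≤ |I N q| := by simpa [hTdef] using hq
    obtain ⟨h1, h2, h3⟩ := hdecay N q hq'
    rw [Finset.mem_biUnion]
    refine ⟨q.1, Finset.mem_univ _, ?_⟩
    exact Finset.mem_product.mpr ⟨Finset.mem_singleton_self _, Finset.mem_product.mpr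
      ⟨by simpa [hSdef] using h1, Finset.mem_product.mpr ⟨by simpa [hSdef] using h2, by simpa [hSdef] using h3⟩⟩⟩
  have hM : (0:ℝ) ≤ 1 + 2 * Rε / d := by positivity
  have hcard : (T.card : ℝ) ≤ ∑ i : Fin N, ((S i).card : ℝ) ^ 3 := by
    have h1 : T.card ≤ ∑ i : Fin N, ({i} ×ˢ S i ×ˢ S i ×ˢ S i).card :=
      le_trans (Finset.card_le_card hsub) (Finset.card_biUnion_le)
    have h2 : ∀ i : Fin N, ({i} ×ˢ S i ×ˢ S i ×ˢ S i).card = (S i).card ^ 3 := by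
      intro i
      simp [Finset.card_product]
      ring
    calc (T.card : ℝ) ≤ ∑ i : Fin N, (({i} ×ˢ S i ×ˢ S i ×ˢ S i).card : ℝ) := by
          exact_mod_cast h1
      _ = ∑ i : Fin N, ((S i).card : ℝ) ^ 3 := by
          refine Finset.sum_congr rfl fun i _ => ?_
          rw [h2 i]; push_cast; ring
  calc (T.card : ℝ) ≤ ∑ i : Fin N, ((S i).card : ℝ) ^ 3 := hcard
    _ ≤ ∑ i : Fin N, ((1 + 2 * Rε / d) ^ 3) ^ 3 := by
        refine Finset.sum_le_sum fun i _ => ?_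
        have := packing_bound d Rε hd hRε (p N) (hsep N) (p N i)
        exact pow_le_pow_left₀ (by positivity) this 3
    _ = (1 + 2 * Rε / d) ^ 9 * N := by
        rw [Finset.sum_const, Finset.card_univ, Fintype.card_fin, nsmul_eq_mul]
        ring
end

section
/- The Coulomb integral of two normalized spherical Gaussian charge distributions centered at A and B with exponents α, β > 0 equals erf(√(αβ/(α+β))·‖A-B‖)/‖A-B‖ when A ≠ B; in particular it is bounded above by 1/‖A-B‖ and is asymptotic to 1/‖A-B‖ as ‖A-B‖ → ∞. -/
open Real Filter MeasureTheory

noncomputable def erf (x : ℝ) : ℝ := (2 / Real.sqrt π) * ∫ t in (0 : ℝ)..x, Real.exp (-t ^ 2)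

noncomputable def gaussDensity (γ : ℝ) (C x : EuclideanSpace ℝ (Fin 3)) : ℝ :=
  (γ / π) ^ ((3 : ℝ) / 2) * Real.exp (-γ * ‖x - C‖ ^ 2)

noncomputable def coulombJ (α β : ℝ) (A B : EuclideanSpace ℝ (Fin 3)) : ℝ :=
  ∫ x : EuclideanSpace ℝ (Fin 3), ∫ y : EuclideanSpace ℝ (Fin 3),
    gaussDensity α A x * gaussDensity β B y / ‖x - y‖

/-!
Write `1 / r = (2 / √π) ∫₀^∞ exp (-t² r²) dt` and exchange the order of integration (Tonelli).
For fixed `t`, the overlap of the two densities against `exp (-t² ‖x - y‖²)` follows from the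
Gaussian product rule applied twice: it is `smearedKernel γ R t = (γ / (γ + t²))^{3/2}
exp (-γ t² R² / (γ + t²))` with `γ = αβ / (α + β)` and `R = ‖A - B‖`. Substituting
`u = √γ t / √(γ + t²)` turns it into `exp (-R² u²) du/dt`, so the `t`-integral is
`erf (√γ R) / R`. The bounds and the asymptotics follow from `0 < erf x ≤ 1` for `x > 0` and
`erf x → 1`.
-/

open Set Topology
open scoped RealInnerProductSpace ENNReal

local notation "E3" => EuclideanSpace ℝ (Fin 3)

theorem hasDerivAt_erf (x : ℝ) : HasDerivAt erf (2 / √π * exp (-x ^ 2)) x := by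
  have hcont : Continuous fun t : ℝ => exp (-t ^ 2) := by fun_prop
  exact (hcont.integral_hasStrictDerivAt 0 x).hasDerivAt.const_mul _

theorem continuous_erf : Continuous erf :=
  continuous_iff_continuousAt.2 fun x => (hasDerivAt_erf x).continuousAt

theorem erf_zero : erf 0 = 0 := by simp [erf]

theorem strictMono_erf : StrictMono erf :=
  strictMono_of_hasDerivAt_pos hasDerivAt_erf fun _ => by positivity

theorem erf_pos {x : ℝ} (hx : 0 < x) : 0 < erf x := erf_zero ▸ strictMono_erf hx

theorem tendsto_erf_atTop : Tendsto erf atTop (𝓝 1) := by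
  have hint : IntegrableOn (fun t : ℝ => exp (-t ^ 2)) (Ioi 0) := by
    simpa using (integrable_exp_neg_mul_sq one_pos).integrableOn
  have h := (intervalIntegral_tendsto_integral_Ioi 0 hint tendsto_id).const_mul (2 / √π)
  have hgauss : ∫ t in Ioi (0 : ℝ), exp (-t ^ 2) = √π / 2 := by
    simpa using integral_gaussian_Ioi 1
  rwa [hgauss, div_mul_div_cancel₀ (by positivity), div_self two_ne_zero] at h

theorem erf_le_one (x : ℝ) : erf x ≤ 1 :=
  strictMono_erf.monotone.ge_of_tendsto tendsto_erf_atTop x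

noncomputable def smearedKernel (γ R t : ℝ) : ℝ :=
  (γ / (γ + t ^ 2)) ^ (3 / 2 : ℝ) * exp (-(γ * t ^ 2 / (γ + t ^ 2)) * R ^ 2)

section SmearedKernel

variable {γ : ℝ}

theorem hasDerivAt_sqrt_mul_div_sqrt (hγ : 0 < γ) (t : ℝ) :
    HasDerivAt (fun t => √γ * t / √(γ + t ^ 2)) ((γ / (γ + t ^ 2)) ^ (3 / 2 : ℝ)) t := by
  have hpos : 0 < γ + t ^ 2 := by positivity
  have hden : HasDerivAt (fun t => √(γ + t ^ 2)) (2 * t / (2 * √(γ + t ^ 2))) t := by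
    simpa using ((hasDerivAt_pow 2 t).const_add γ).sqrt hpos.ne'
  refine (((hasDerivAt_id t).const_mul √γ).div hden (by positivity)).congr_deriv ?_
  rw [show (3 / 2 : ℝ) = 1 / 2 + 1 by norm_num, rpow_add_one (by positivity), ← sqrt_eq_rpow,
    sqrt_div hγ.le, sq_sqrt hpos.le]
  field_simp
  rw [sq_sqrt hpos.le, id]
  ring

theorem tendsto_sqrt_mul_div_sqrt (hγ : 0 ≤ γ) :
    Tendsto (fun t => √γ * t / √(γ + t ^ 2)) atTop (𝓝 √γ) := by
  have hlim : Tendsto (fun t : ℝ => √γ / √(γ / t ^ 2 + 1)) atTop (𝓝 (√γ / √(0 + 1))) :=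
    tendsto_const_nhds.div ((tendsto_const_nhds.div_atTop (tendsto_pow_atTop two_ne_zero)).add
      tendsto_const_nhds).sqrt (by simp)
  rw [zero_add, sqrt_one, div_one] at hlim
  refine hlim.congr' ?_
  filter_upwards [eventually_gt_atTop 0] with t ht
  rw [show γ + t ^ 2 = (γ / t ^ 2 + 1) * t ^ 2 by field_simp, sqrt_mul (by positivity),
    sqrt_sq ht.le]
  field_simp

theorem hasDerivAt_erf_mul_sqrt_mul_div_sqrt (hγ : 0 < γ) {R : ℝ} (hR : 0 < R) (t : ℝ) :
    HasDerivAt (fun t => erf (R * (√γ * t / √(γ + t ^ 2))) / R)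
      (2 / √π * smearedKernel γ R t) t := by
  refine (((hasDerivAt_erf _).comp t
    ((hasDerivAt_sqrt_mul_div_sqrt hγ t).const_mul R)).div_const R).congr_deriv ?_
  have hpos : 0 < γ + t ^ 2 := by positivity
  rw [smearedKernel, mul_pow, div_pow, sq_sqrt hpos.le, mul_pow, sq_sqrt hγ.le]
  field_simp

theorem tendsto_erf_mul_sqrt_mul_div_sqrt (hγ : 0 ≤ γ) (R : ℝ) :
    Tendsto (fun t => erf (R * (√γ * t / √(γ + t ^ 2))) / R) atTop (𝓝 (erf (√γ * R) / R)) := by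
  rw [mul_comm √γ]
  exact ((continuous_erf.tendsto _).comp ((tendsto_sqrt_mul_div_sqrt hγ).const_mul R)).div_const R

theorem integrableOn_Ioi_smearedKernel (hγ : 0 < γ) {R : ℝ} (hR : 0 < R) :
    IntegrableOn (fun t => 2 / √π * smearedKernel γ R t) (Ioi 0) :=
  integrableOn_Ioi_deriv_of_nonneg' (fun t _ => hasDerivAt_erf_mul_sqrt_mul_div_sqrt hγ hR t)
    (fun t _ => by unfold smearedKernel; positivity) (tendsto_erf_mul_sqrt_mul_div_sqrt hγ.le R)

theorem integral_Ioi_smearedKernel (hγ : 0 < γ) {R : ℝ} (hR : 0 < R) :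
    ∫ t in Ioi 0, 2 / √π * smearedKernel γ R t = erf (√γ * R) / R := by
  rw [integral_Ioi_of_hasDerivAt_of_nonneg'
    (fun t _ => hasDerivAt_erf_mul_sqrt_mul_div_sqrt hγ hR t)
    (fun t _ => by unfold smearedKernel; positivity) (tendsto_erf_mul_sqrt_mul_div_sqrt hγ.le R)]
  simp [erf_zero]

end SmearedKernel

section GaussianIntegral

variable {V : Type*} [NormedAddCommGroup V] [InnerProductSpace ℝ V]

theorem neg_mul_sq_norm_sub_sub_mul_sq_norm_sub (p q : ℝ) (c d y : V) :
    -p * ‖y - c‖ ^ 2 - q * ‖y - d‖ ^ 2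
      = -(p + q) * ‖y‖ ^ 2 + ⟪(2 * p) • c + (2 * q) • d, y⟫ - (p * ‖c‖ ^ 2 + q * ‖d‖ ^ 2) := by
  rw [norm_sub_sq_real, norm_sub_sq_real, inner_add_left, real_inner_smul_left,
    real_inner_smul_left, real_inner_comm c y, real_inner_comm d y]
  ring

variable [FiniteDimensional ℝ V] [MeasurableSpace V] [BorelSpace V]

theorem integrable_exp_neg_mul_sq_norm_add_inner {b : ℝ} (hb : 0 < b) (w : V) :
    Integrable fun v : V => exp (-b * ‖v‖ ^ 2 + ⟪w, v⟫) := by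
  have h := (GaussianFourier.integrable_cexp_neg_mul_sq_norm_add (b := b) hb 1 w).re
  refine h.congr (ae_of_all _ fun v => ?_)
  simp only [RCLike.re_to_complex]
  norm_cast
  simp

theorem integral_exp_neg_mul_sq_norm_add_inner {b : ℝ} (hb : 0 < b) (w : V) :
    ∫ v : V, exp (-b * ‖v‖ ^ 2 + ⟪w, v⟫)
      = (π / b) ^ (Module.finrank ℝ V / 2 : ℝ) * exp (‖w‖ ^ 2 / (4 * b)) := by
  have h := GaussianFourier.integral_cexp_neg_mul_sq_norm_add (b := b) hb 1 w
  have hofReal : ∀ v : V, Complex.exp (-(b : ℂ) * ‖v‖ ^ 2 + 1 * ⟪w, v⟫)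
      = (exp (-b * ‖v‖ ^ 2 + ⟪w, v⟫) : ℝ) := fun v => by
    push_cast
    ring_nf
  simp_rw [hofReal, integral_complex_ofReal] at h
  apply Complex.ofReal_injective
  rw [h, Complex.ofReal_mul, Complex.ofReal_cpow (by positivity)]
  push_cast
  ring_nf

theorem integrable_exp_neg_mul_sq_norm_sub_sub {p q : ℝ} (hpq : 0 < p + q) (c d : V) :
    Integrable fun y : V => exp (-p * ‖y - c‖ ^ 2 - q * ‖y - d‖ ^ 2) := by
  simp_rw [neg_mul_sq_norm_sub_sub_mul_sq_norm_sub, exp_sub]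
  exact (integrable_exp_neg_mul_sq_norm_add_inner hpq _).div_const _

theorem integral_exp_neg_mul_sq_norm_sub_sub {p q : ℝ} (hpq : 0 < p + q) (c d : V) :
    ∫ y : V, exp (-p * ‖y - c‖ ^ 2 - q * ‖y - d‖ ^ 2)
      = (π / (p + q)) ^ (Module.finrank ℝ V / 2 : ℝ) * exp (-(p * q / (p + q)) * ‖c - d‖ ^ 2) := by
  simp_rw [neg_mul_sq_norm_sub_sub_mul_sq_norm_sub, exp_sub]
  rw [integral_div, integral_exp_neg_mul_sq_norm_add_inner hpq, mul_div_assoc, ← exp_sub]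
  congr 2
  rw [norm_add_sq_real, norm_smul, norm_smul, real_inner_smul_left, real_inner_smul_right,
    norm_sub_sq_real, Real.norm_eq_abs, Real.norm_eq_abs, mul_pow, mul_pow, sq_abs, sq_abs]
  field_simp
  ring_nf

end GaussianIntegral

section IteratedIntegral

variable {X Y T : Type*} [MeasurableSpace X] [MeasurableSpace Y] [MeasurableSpace T]
  {μ : Measure X} {ν : Measure Y} {ρ : Measure T}

theorem lintegral_lintegral_ofReal {F : X → Y → ℝ} (hF : ∀ x y, 0 ≤ F x y)
    (hint : ∀ x, Integrable (F x) ν) (hint' : Integrable (fun x => ∫ y, F x y ∂ν) μ) :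
    ∫⁻ x, ∫⁻ y, ENNReal.ofReal (F x y) ∂ν ∂μ = ENNReal.ofReal (∫ x, ∫ y, F x y ∂ν ∂μ) := by
  simp_rw [← ofReal_integral_eq_lintegral_ofReal (hint _) (ae_of_all _ (hF _))]
  exact (ofReal_integral_eq_lintegral_ofReal hint'
    (ae_of_all _ fun x => integral_nonneg (hF x))).symm

theorem integral_integral_eq_toReal_lintegral_lintegral [SFinite μ] [SFinite ν]
    {F : X → Y → ℝ} (hF : Measurable (Function.uncurry F)) (h0 : ∀ x y, 0 ≤ F x y)
    (hfin : ∫⁻ x, ∫⁻ y, ENNReal.ofReal (F x y) ∂ν ∂μ ≠ ∞) :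
    ∫ x, ∫ y, F x y ∂ν ∂μ = (∫⁻ x, ∫⁻ y, ENNReal.ofReal (F x y) ∂ν ∂μ).toReal := by
  have h0' : 0 ≤ᵐ[μ.prod ν] Function.uncurry F := ae_of_all _ fun z => h0 z.1 z.2
  have hint : Integrable (Function.uncurry F) (μ.prod ν) := by
    refine ⟨hF.aestronglyMeasurable, (hasFiniteIntegral_iff_ofReal h0').2 ?_⟩
    rw [lintegral_prod _ hF.ennreal_ofReal.aemeasurable]
    exact hfin.lt_top
  refine (integral_prod _ hint).symm.trans ?_
  rw [integral_eq_lintegral_of_nonneg_ae h0' hF.aestronglyMeasurable,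
    lintegral_prod _ hF.ennreal_ofReal.aemeasurable]
  rfl

theorem lintegral_lintegral_lintegral_swap [SFinite μ] [SFinite ν] [SFinite ρ]
    {G : X → Y → T → ℝ≥0∞} (hG : Measurable fun p : (X × Y) × T => G p.1.1 p.1.2 p.2) :
    ∫⁻ x, ∫⁻ y, ∫⁻ t, G x y t ∂ρ ∂ν ∂μ = ∫⁻ t, ∫⁻ x, ∫⁻ y, G x y t ∂ν ∂μ ∂ρ := by
  calc ∫⁻ x, ∫⁻ y, ∫⁻ t, G x y t ∂ρ ∂ν ∂μ
      = ∫⁻ z, ∫⁻ t, G z.1 z.2 t ∂ρ ∂(μ.prod ν) :=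
        (lintegral_prod _ hG.lintegral_prod_right'.aemeasurable).symm
    _ = ∫⁻ t, ∫⁻ z, G z.1 z.2 t ∂(μ.prod ν) ∂ρ := lintegral_lintegral_swap hG.aemeasurable
    _ = ∫⁻ t, ∫⁻ x, ∫⁻ y, G x y t ∂ν ∂μ ∂ρ := lintegral_congr fun t =>
        lintegral_prod _ (hG.comp (measurable_id.prodMk measurable_const)).aemeasurable

end IteratedIntegral

theorem ofReal_div_eq_lintegral_Ioi {a r : ℝ} (ha : 0 ≤ a) (hr : 0 < r) :
    ENNReal.ofReal (a / r)
      = ∫⁻ t in Ioi 0, ENNReal.ofReal (2 / √π * (a * exp (-t ^ 2 * r ^ 2))) := by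
  have hgauss : ∀ t : ℝ, exp (-t ^ 2 * r ^ 2) = exp (-r ^ 2 * t ^ 2) := fun t => by ring_nf
  simp_rw [hgauss]
  rw [← ofReal_integral_eq_lintegral_ofReal
    (((integrable_exp_neg_mul_sq (by positivity)).const_mul a).const_mul _).integrableOn
    (ae_of_all _ fun t => by positivity), integral_const_mul, integral_const_mul,
    integral_gaussian_Ioi, sqrt_div pi_pos.le, sqrt_sq hr.le]
  congr 1
  field_simp

@[fun_prop]
theorem continuous_gaussDensity (γ : ℝ) (C : E3) : Continuous (gaussDensity γ C) := by
  unfold gaussDensity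
  fun_prop

theorem gaussDensity_nonneg {γ : ℝ} (hγ : 0 ≤ γ) (C x : E3) : 0 ≤ gaussDensity γ C x :=
  mul_nonneg (rpow_nonneg (by positivity) _) (exp_pos _).le

theorem integrable_gaussDensity_mul_exp {p q : ℝ} (hpq : 0 < p + q) (c d : E3) :
    Integrable fun y => gaussDensity p c y * exp (-q * ‖y - d‖ ^ 2) := by
  simp_rw [gaussDensity, mul_assoc, ← exp_add, neg_mul q, ← sub_eq_add_neg]
  exact (integrable_exp_neg_mul_sq_norm_sub_sub hpq c d).const_mul _

theorem integral_gaussDensity_mul_exp {p q : ℝ} (hp : 0 ≤ p) (hpq : 0 < p + q) (c d : E3) :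
    ∫ y, gaussDensity p c y * exp (-q * ‖y - d‖ ^ 2)
      = (p / (p + q)) ^ (3 / 2 : ℝ) * exp (-(p * q / (p + q)) * ‖c - d‖ ^ 2) := by
  simp_rw [gaussDensity, mul_assoc, ← exp_add, neg_mul q, ← sub_eq_add_neg]
  rw [integral_const_mul, integral_exp_neg_mul_sq_norm_sub_sub hpq, finrank_euclideanSpace_fin,
    Nat.cast_ofNat, ← mul_assoc, ← mul_rpow (by positivity) (by positivity)]
  field_simp

theorem lintegral_lintegral_gaussDensity_mul_exp {α β : ℝ} (hα : 0 < α) (hβ : 0 < β)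
    (A B : E3) (t : ℝ) :
    ∫⁻ x, ∫⁻ y, ENNReal.ofReal
        (gaussDensity α A x * (gaussDensity β B y * exp (-t ^ 2 * ‖y - x‖ ^ 2)))
      = ENNReal.ofReal (smearedKernel (α * β / (α + β)) ‖A - B‖ t) := by
  set ν := β * t ^ 2 / (β + t ^ 2)
  have hβt : 0 < β + t ^ 2 := by positivity
  have hαν : 0 < α + ν := by positivity
  have inner : ∀ x, ∫ y, gaussDensity α A x * (gaussDensity β B y * exp (-t ^ 2 * ‖y - x‖ ^ 2))
      = (β / (β + t ^ 2)) ^ (3 / 2 : ℝ) * (gaussDensity α A x * exp (-ν * ‖x - B‖ ^ 2)) := by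
    intro x
    rw [integral_const_mul, integral_gaussDensity_mul_exp hβ.le hβt, norm_sub_rev]
    ring
  have hint : Integrable fun x =>
      ∫ y, gaussDensity α A x * (gaussDensity β B y * exp (-t ^ 2 * ‖y - x‖ ^ 2)) := by
    simp_rw [inner]
    exact (integrable_gaussDensity_mul_exp hαν A B).const_mul _
  have hnonneg : ∀ x y,
      0 ≤ gaussDensity α A x * (gaussDensity β B y * exp (-t ^ 2 * ‖y - x‖ ^ 2)) :=
    fun x y => mul_nonneg (gaussDensity_nonneg hα.le _ _)
      (mul_nonneg (gaussDensity_nonneg hβ.le _ _) (exp_pos _).le)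
  rw [lintegral_lintegral_ofReal hnonneg
    (fun x => (integrable_gaussDensity_mul_exp hβt B x).const_mul _) hint]
  simp_rw [inner]
  rw [integral_const_mul, integral_gaussDensity_mul_exp hα.le hαν, smearedKernel, ← mul_assoc,
    ← mul_rpow (by positivity) (by positivity)]
  have hratio : β / (β + t ^ 2) * (α / (α + ν))
      = α * β / (α + β) / (α * β / (α + β) + t ^ 2) := by
    simp only [ν]
    field_simp
    ring
  have hexponent : α * ν / (α + ν) = α * β / (α + β) * t ^ 2 / (α * β / (α + β) + t ^ 2) := by
    simp only [ν]
    field_simp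
    ring
  rw [hratio, hexponent]

theorem lintegral_lintegral_coulomb {α β : ℝ} (hα : 0 < α) (hβ : 0 < β) {A B : E3} (hAB : A ≠ B) :
    ∫⁻ x, ∫⁻ y, ENNReal.ofReal (gaussDensity α A x * gaussDensity β B y / ‖x - y‖)
      = ENNReal.ofReal (erf (√(α * β / (α + β)) * ‖A - B‖) / ‖A - B‖) := by
  have hR : 0 < ‖A - B‖ := norm_pos_iff.2 (sub_ne_zero.2 hAB)
  have hγ : 0 < α * β / (α + β) := by positivity
  calc ∫⁻ x, ∫⁻ y, ENNReal.ofReal (gaussDensity α A x * gaussDensity β B y / ‖x - y‖)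
      = ∫⁻ x, ∫⁻ y, ∫⁻ t in Ioi 0, ENNReal.ofReal (2 / √π *
          (gaussDensity α A x * (gaussDensity β B y * exp (-t ^ 2 * ‖y - x‖ ^ 2)))) := by
        refine lintegral_congr fun x => lintegral_congr_ae ?_
        filter_upwards [compl_mem_ae_iff.2 (measure_singleton x)] with y hy
        rw [norm_sub_rev, ofReal_div_eq_lintegral_Ioi (mul_nonneg (gaussDensity_nonneg hα.le _ _)
          (gaussDensity_nonneg hβ.le _ _)) (norm_pos_iff.2 (sub_ne_zero.2 hy))]
        simp_rw [mul_assoc]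
    _ = ∫⁻ t in Ioi 0, ∫⁻ x, ∫⁻ y, ENNReal.ofReal (2 / √π *
          (gaussDensity α A x * (gaussDensity β B y * exp (-t ^ 2 * ‖y - x‖ ^ 2)))) :=
        lintegral_lintegral_lintegral_swap (by fun_prop)
    _ = ∫⁻ t in Ioi 0, ENNReal.ofReal (2 / √π * smearedKernel (α * β / (α + β)) ‖A - B‖ t) := by
        refine lintegral_congr fun t => ?_
        simp_rw [ENNReal.ofReal_mul (by positivity : (0 : ℝ) ≤ 2 / √π),
          lintegral_const_mul' _ _ ENNReal.ofReal_ne_top,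
          lintegral_lintegral_gaussDensity_mul_exp hα hβ]
    _ = ENNReal.ofReal (erf (√(α * β / (α + β)) * ‖A - B‖) / ‖A - B‖) := by
        rw [← ofReal_integral_eq_lintegral_ofReal (integrableOn_Ioi_smearedKernel hγ hR)
          (ae_of_all _ fun t => by unfold smearedKernel; positivity),
          integral_Ioi_smearedKernel hγ hR]

theorem coulombJ_eq_erf_div {α β : ℝ} (hα : 0 < α) (hβ : 0 < β) {A B : E3} (hAB : A ≠ B) :
    coulombJ α β A B = erf (√(α * β / (α + β)) * ‖A - B‖) / ‖A - B‖ := by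
  have hR : 0 < ‖A - B‖ := norm_pos_iff.2 (sub_ne_zero.2 hAB)
  rw [coulombJ, integral_integral_eq_toReal_lintegral_lintegral (by fun_prop)
      (fun x y => div_nonneg (mul_nonneg (gaussDensity_nonneg hα.le _ _)
        (gaussDensity_nonneg hβ.le _ _)) (norm_nonneg _))
      ((lintegral_lintegral_coulomb hα hβ hAB).symm ▸ ENNReal.ofReal_ne_top),
    lintegral_lintegral_coulomb hα hβ hAB, ENNReal.toReal_ofReal]
  exact div_nonneg (erf_pos (by positivity)).le hR.le

/-- The Coulomb integral of two normalized spherical Gaussian distributions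
equals erf(√(αβ/(α+β))·‖A-B‖)/‖A-B‖, is bounded by 1/‖A-B‖, and is asymptotic
to 1/‖A-B‖ as the centers separate. -/
theorem coulomb_gaussians (α β : ℝ) (hα : 0 < α) (hβ : 0 < β) :
    (∀ A B : EuclideanSpace ℝ (Fin 3), A ≠ B →
      coulombJ α β A B = erf (Real.sqrt (α * β / (α + β)) * ‖A - B‖) / ‖A - B‖ ∧
      0 < coulombJ α β A B ∧ coulombJ α β A B ≤ 1 / ‖A - B‖) ∧
    Tendsto
      (fun p : EuclideanSpace ℝ (Fin 3) × EuclideanSpace ℝ (Fin 3) =>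
        coulombJ α β p.1 p.2 * ‖p.1 - p.2‖)
      (Filter.comap (fun p : EuclideanSpace ℝ (Fin 3) × EuclideanSpace ℝ (Fin 3) =>
        ‖p.1 - p.2‖) atTop)
      (nhds 1) := by
  have hsγ : 0 < √(α * β / (α + β)) := by positivity
  refine ⟨fun A B hAB => ?_, ?_⟩
  · have hR : 0 < ‖A - B‖ := norm_pos_iff.2 (sub_ne_zero.2 hAB)
    rw [coulombJ_eq_erf_div hα hβ hAB]
    exact ⟨rfl, div_pos (erf_pos (mul_pos hsγ hR)) hR,
      div_le_div_of_nonneg_right (erf_le_one _) hR.le⟩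
  · have hdist : Tendsto (fun p : E3 × E3 => ‖p.1 - p.2‖)
        (comap (fun p : E3 × E3 => ‖p.1 - p.2‖) atTop) atTop := tendsto_comap
    refine (tendsto_erf_atTop.comp (hdist.const_mul_atTop hsγ)).congr' ?_
    filter_upwards [hdist.eventually_gt_atTop 0] with p hp
    rw [Function.comp_apply, coulombJ_eq_erf_div hα hβ (sub_ne_zero.1 (norm_pos_iff.1 hp)),
      div_mul_cancel₀ _ hp.ne']
end
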